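/- arXiv:2603.25079 — 2 statements merged into one kernel-verified Lean document; each statement's English description precedes it below -/
import Mathlib

section
/- Let A be an algebra over a field satisfying the δ-Novikov identities δ(xy)z − x(yz) = δ(yx)z − y(xz) and (xy)z = (xz)y for some scalar δ. Then the algebra A⁻ with product [x,y] := (1/2)(xy − yx) is a Lie algebra. -/
/-- Summing the first identity over the cyclic permutations of `x, y, z` and correcting with
`δ - 1` times the cyclic sum of the second leaves exactly the Jacobiator of the commutator. -/
theorem jacobi_sub_flip_of_deltaNovikov {R A : Type*} [CommRing R] [AddCommGroup A] [Module R A]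
    (m : A →ₗ[R] A →ₗ[R] A) (δ : R)
    (h1 : ∀ x y z : A, δ • m (m x y) z - m x (m y z) = δ • m (m y x) z - m y (m x z))
    (h2 : ∀ x y z : A, m (m x y) z = m (m x z) y) (x y z : A) :
    (m - m.flip) x ((m - m.flip) y z) + (m - m.flip) y ((m - m.flip) z x)
      + (m - m.flip) z ((m - m.flip) x y) = 0 := by
  simp only [LinearMap.sub_apply, LinearMap.flip_apply, map_sub]
  linear_combination (norm := module) -h1 x y z - h1 y z x - h1 z x y
    + (δ - 1) • (h2 x y z + h2 y z x + h2 z x y)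

/-- the commutator algebra of a δ-Novikov algebra is a Lie algebra. -/
theorem stmt_0 {K A : Type*} [Field K] [AddCommGroup A] [Module K A]
    (m : A →ₗ[K] A →ₗ[K] A) (δ : K)
    (h1 : ∀ x y z : A, δ • m (m x y) z - m x (m y z) = δ • m (m y x) z - m y (m x z))
    (h2 : ∀ x y z : A, m (m x y) z = m (m x z) y)
    (br : A → A → A) (hbr : ∀ x y, br x y = (2 : K)⁻¹ • (m x y - m y x)) :
    (∀ x, br x x = 0) ∧
    (∀ x y, br x y = - br y x) ∧
    (∀ x y z, br x (br y z) + br y (br z x) + br z (br x y) = 0) := by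
  have hbr' : ∀ x y, br x y = (2 : K)⁻¹ • (m - m.flip) x y := fun x y => by simp [hbr]
  refine ⟨fun x => by simp [hbr], fun x y => by rw [hbr, hbr]; module, fun x y z => ?_⟩
  simp only [hbr', map_smul, ← smul_add]
  rw [jacobi_sub_flip_of_deltaNovikov m δ h1 h2, smul_zero, smul_zero]
end

section
/- For α, β ∈ ℂ, the 3-dimensional algebras N₀₂^α and N₀₂^β (with products e₁·e₁ = e₃, e₁·e₂ = e₃, e₂·e₁ = −e₃, e₂·e₂ = α e₃ resp. β e₃) are isomorphic if and only if α = β. -/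
/-!
The product of `N₀₂^γ` is `B_γ(x, y) e₃` for a bilinear form `B_γ` on `ℂ³ / ⟨e₃⟩`, whose symmetric
part is `diag(1, γ)` and whose skew part has determinant `1`. An isomorphism `φ` with
`φ e₃ = k e₃` (`k ≠ 0`) pulls `B_β` back to `k B_α`, so it multiplies both Gram determinants by
`k² det(P)²`, where `P` is the map induced on `ℂ³ / ⟨e₃⟩`; hence their ratio `γ` is an invariant.
-/

/-- Multiplication of N₀₂^γ on ℂ³: e₁e₁ = e₃, e₁e₂ = e₃, e₂e₁ = −e₃, e₂e₂ = γ e₃. -/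
noncomputable def mulN02 (γ : ℂ) (x y : Fin 3 → ℂ) : Fin 3 → ℂ :=
  ![0, 0, x 0 * y 0 + x 0 * y 1 - x 1 * y 0 + γ * (x 1 * y 1)]

def formN02 {R : Type*} [CommRing R] (γ : R) (x y : Fin 3 → R) : R :=
  x 0 * y 0 + x 0 * y 1 - x 1 * y 0 + γ * (x 1 * y 1)

/-- The sum and difference of `formN02 γ u v` and `formN02 γ v u` are twice `u₀v₀ + γ u₁v₁` and
twice `u₀v₁ - u₁v₀`: the Gram determinant of the symmetric part is `γ` times that of the skew part. -/
theorem formN02_gram_identity {R : Type*} [CommRing R] (γ : R) (u v : Fin 3 → R) :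
    4 * formN02 γ u u * formN02 γ v v - (formN02 γ u v + formN02 γ v u) ^ 2 =
      γ * (formN02 γ u v - formN02 γ v u) ^ 2 := by
  unfold formN02
  ring

theorem mulN02_eq_smul (γ : ℂ) (x y : Fin 3 → ℂ) :
    mulN02 γ x y = formN02 γ x y • Pi.single 2 1 := by
  ext i
  fin_cases i <;> simp [mulN02, formN02]

section Isomorphism

variable {α β : ℂ} (φ : (Fin 3 → ℂ) ≃ₗ[ℂ] (Fin 3 → ℂ))
  (hφ : ∀ x y, φ (mulN02 α x y) = mulN02 β (φ x) (φ y))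
include hφ

theorem formN02_map (x y : Fin 3 → ℂ) :
    formN02 β (φ x) (φ y) = formN02 α x y * φ (Pi.single 2 1) 2 := by
  have h := congrFun (hφ x y) 2
  simp only [mulN02_eq_smul, map_smul] at h
  simpa [mul_comm] using h.symm

theorem apply_single_two_two_ne_zero : φ (Pi.single 2 1) 2 ≠ 0 := by
  set e₁ : Fin 3 → ℂ := Pi.single 0 1
  have h : φ (Pi.single 2 1) = formN02 β (φ e₁) (φ e₁) • Pi.single 2 1 := by
    rw [← mulN02_eq_smul, ← hφ, mulN02_eq_smul]
    simp [e₁, formN02]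
  intro h0
  rw [h] at h0
  have : φ (Pi.single 2 1) = 0 := by
    rw [h]
    simpa using h0
  simp at this

end Isomorphism

/-- N₀₂^α ≅ N₀₂^β if and only if α = β. -/
theorem stmt_10 (α β : ℂ) :
    (∃ φ : (Fin 3 → ℂ) ≃ₗ[ℂ] (Fin 3 → ℂ),
      ∀ x y, φ (mulN02 α x y) = mulN02 β (φ x) (φ y)) ↔ α = β := by
  refine ⟨fun ⟨φ, hφ⟩ => ?_, fun h => h ▸ ⟨LinearEquiv.refl ℂ _, fun _ _ => rfl⟩⟩
  set k := φ (Pi.single 2 1) 2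
  have hk : k ≠ 0 := apply_single_two_two_ne_zero φ hφ
  have h := formN02_gram_identity β (φ (Pi.single 0 1)) (φ (Pi.single 1 1))
  simp only [formN02_map φ hφ] at h
  norm_num [formN02, Pi.single_apply] at h
  have hk2 : α * k ^ 2 = β * k ^ 2 := by linear_combination h / 4
  exact mul_right_cancel₀ (pow_ne_zero 2 hk) hk2
end
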